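/- Consider the unfair divisible sandpile started from an initial configuration ν₀ with finite total mass M and bounded support, and let T be a legal toppling scheme for ν₀. Then as k → ∞ the odometers u_k and the configurations ν_k converge pointwise to limits u and ν; the limiting configuration satisfies ν(x) ≤ 1 for every x ∈ ℤ^d, and the mass relation ν = ν₀ + 𝒦u holds. -/

import Mathlib

open MeasureTheory Filter Real
open scoped Classical

noncomputable section

/-- The lattice ℤ^d, viewed as ℤ^{d-1} (space) × ℤ (drift direction). -/
abbrev LatZ (d : ℕ) := (Fin (d-1) → ℤ) × ℤ

/-- The fraction of toppled mass sent from `x` to `y`: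
`p` to `x + e_d`, `(1-p)/(2(d-1))` to each `x ± e_i`, `0` otherwise. -/
def nbrWeight (d : ℕ) (p : ℝ) (x y : LatZ d) : ℝ :=
  (if y = (x.1, x.2 + 1) then p else 0) +
  ((1 - p) / (2 * ((d : ℝ) - 1))) *
    ∑ i : Fin (d-1),
      ((if y = (Function.update x.1 i (x.1 i + 1), x.2) then (1:ℝ) else 0) +
       (if y = (Function.update x.1 i (x.1 i - 1), x.2) then (1:ℝ) else 0))

/-- Toppling a site: a full site keeps mass 1 and distributes the excess to its
neighbors according to `nbrWeight`; toppling a non-full site does nothing. -/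
def topple (d : ℕ) (p : ℝ) (ν : LatZ d → ℝ) (x : LatZ d) : LatZ d → ℝ :=
  if 1 ≤ ν x then
    fun y => (if y = x then 1 else ν y) + (ν x - 1) * nbrWeight d p x y
  else ν

/-- The configuration after the first `k` topplings of the scheme `T`. -/
def config (d : ℕ) (p : ℝ) (ν₀ : LatZ d → ℝ) (T : ℕ → LatZ d) : ℕ → LatZ d → ℝ
  | 0 => ν₀
  | k + 1 => topple d p (config d p ν₀ T k) (T k)

/-- Mass emitted from a site `x` when it is toppled in configuration `ν`. -/
def emitted (d : ℕ) (ν : LatZ d → ℝ) (x : LatZ d) : ℝ := if 1 ≤ ν x then ν x - 1 else 0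

/-- The odometer after `k` topplings: total mass emitted from `x` so far. -/
def odom (d : ℕ) (p : ℝ) (ν₀ : LatZ d → ℝ) (T : ℕ → LatZ d) (k : ℕ) (x : LatZ d) : ℝ :=
  ∑ j ∈ Finset.range k, if T j = x then emitted d (config d p ν₀ T j) x else 0

/-- A toppling scheme: every site that is full at some stage occurs infinitely often
afterwards in the sequence. -/
def IsScheme (d : ℕ) (p : ℝ) (ν₀ : LatZ d → ℝ) (T : ℕ → LatZ d) : Prop :=
  ∀ k x, 1 ≤ config d p ν₀ T k x → ∀ m, ∃ j, m ≤ j ∧ T j = x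

/-- A legal scheme only topples full sites. -/
def IsLegal (d : ℕ) (p : ℝ) (ν₀ : LatZ d → ℝ) (T : ℕ → LatZ d) : Prop :=
  ∀ k, 1 ≤ config d p ν₀ T k (T k)

/-- The discrete heat operator 𝒦. -/
def Kop (d : ℕ) (p : ℝ) (f : LatZ d → ℝ) (x : LatZ d) : ℝ :=
  ((1 - p) / (2 * ((d : ℝ) - 1))) *
    ∑ i : Fin (d-1),
      ((f (Function.update x.1 i (x.1 i + 1), x.2) - f x) +
       (f (Function.update x.1 i (x.1 i - 1), x.2) - f x))
  - p * (f x - f (x.1, x.2 - 1))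

end

/-!
Each toppling changes the configuration by `𝒦` of the mass it emits, so `ν_k = ν₀ + 𝒦 u_k`
throughout. Since `f + 𝒦 f` is a nonnegative combination of neighbouring values of `f`, a least
action principle bounds the odometers by any `w ≥ 0` with `ν₀ + 𝒦 w ≤ 1`, and because of the
drift in direction `e_d` a ramp in the last coordinate is such a `w`. The odometers increase,
hence converge, and the identity passes to the limit. A limit mass above `1` at `x` would make
each of the infinitely many later topplings of `x` emit a definite amount, contradicting the
convergence of `u_k x`.
-/

open Function

section Lattice

variable {d : ℕ} {p : ℝ}

lemma update_add_eq_iff {ι G : Type*} [DecidableEq ι] [AddCommGroup G] (f g : ι → G) (i : ι)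
    (a : G) : update f i (f i + a) = g ↔ f = update g i (g i - a) := by
  rw [update_eq_iff, eq_update_iff, eq_sub_iff_add_eq, eq_comm]

lemma update_sub_eq_iff {ι G : Type*} [DecidableEq ι] [AddCommGroup G] (f g : ι → G) (i : ι)
    (a : G) : update f i (f i - a) = g ↔ f = update g i (g i + a) := by
  rw [sub_eq_add_neg, update_add_eq_iff, sub_neg_eq_add]

/-- The transpose of the toppling kernel `nbrWeight` (see `nbrAvg_single`). -/
noncomputable def nbrAvg (d : ℕ) (p : ℝ) (f : LatZ d → ℝ) (x : LatZ d) : ℝ :=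
  ((1 - p) / (2 * ((d : ℝ) - 1))) *
    ∑ i : Fin (d-1),
      (f (update x.1 i (x.1 i + 1), x.2) + f (update x.1 i (x.1 i - 1), x.2))
  + p * f (x.1, x.2 - 1)

lemma Kop_eq_nbrAvg_sub (hd : 2 ≤ d) (f : LatZ d → ℝ) (x : LatZ d) :
    Kop d p f x = nbrAvg d p f x - f x := by
  have hd' : (2 : ℝ) ≤ d := by exact_mod_cast hd
  have hcard : ((d - 1 : ℕ) : ℝ) = d - 1 := by rw [Nat.cast_sub (by omega), Nat.cast_one]
  have hmass : (1 - p) / (2 * ((d : ℝ) - 1)) * (2 * (d - 1)) = 1 - p :=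
    div_mul_cancel₀ _ (by linarith)
  simp only [Kop, nbrAvg, Finset.sum_add_distrib, Finset.sum_sub_distrib, Finset.sum_const,
    Finset.card_univ, Fintype.card_fin, nsmul_eq_mul, hcard]
  linear_combination (-f x) * hmass

lemma nbrAvg_mono (hd : 1 ≤ d) (hp₀ : 0 ≤ p) (hp₁ : p ≤ 1) {f g : LatZ d → ℝ} (hfg : f ≤ g)
    (x : LatZ d) : nbrAvg d p f x ≤ nbrAvg d p g x := by
  have hd' : (1 : ℝ) ≤ d := by exact_mod_cast hd
  have hc : 0 ≤ (1 - p) / (2 * ((d : ℝ) - 1)) := by apply div_nonneg <;> linarith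
  unfold nbrAvg
  gcongr <;> apply hfg

lemma nbrAvg_single (t : LatZ d) (a : ℝ) (y : LatZ d) :
    nbrAvg d p (Pi.single t a) y = a * nbrWeight d p t y := by
  have hdrift : (y.1, y.2 - 1) = t ↔ y = (t.1, t.2 + 1) := by
    simp only [Prod.ext_iff, sub_eq_iff_eq_add]
  have hup (i : Fin (d-1)) :
      (update y.1 i (y.1 i + 1), y.2) = t ↔ y = (update t.1 i (t.1 i - 1), t.2) := by
    simp only [Prod.ext_iff, update_add_eq_iff]
  have hdown (i : Fin (d-1)) :
      (update y.1 i (y.1 i - 1), y.2) = t ↔ y = (update t.1 i (t.1 i + 1), t.2) := by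
    simp only [Prod.ext_iff, update_sub_eq_iff]
  simp only [nbrAvg, nbrWeight, Pi.single_apply, hdrift, hup, hdown]
  rw [mul_add, add_comm, Finset.mul_sum, Finset.mul_sum, Finset.mul_sum]
  congr 1
  · split_ifs <;> ring
  · exact Finset.sum_congr rfl fun i _ => by split_ifs <;> ring

lemma Kop_add (f g : LatZ d → ℝ) (x : LatZ d) :
    Kop d p (f + g) x = Kop d p f x + Kop d p g x := by
  simp only [Kop, Pi.add_apply, add_sub_add_comm, Finset.sum_add_distrib]
  ring

lemma Kop_comp_snd (g : ℤ → ℝ) (x : LatZ d) :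
    Kop d p (fun z => g z.2) x = -(p * (g x.2 - g (x.2 - 1))) := by
  simp only [Kop, sub_self, add_zero, Finset.sum_const_zero, mul_zero, zero_sub]

lemma continuous_Kop_apply (x : LatZ d) : Continuous fun f : LatZ d → ℝ => Kop d p f x := by
  unfold Kop
  fun_prop

end Lattice

section Toppling

variable {d : ℕ} {p : ℝ}

lemma emitted_of_one_le {ν : LatZ d → ℝ} {x : LatZ d} (hx : 1 ≤ ν x) :
    emitted d ν x = ν x - 1 :=
  if_pos hx

lemma emitted_nonneg (ν : LatZ d → ℝ) (x : LatZ d) : 0 ≤ emitted d ν x := by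
  unfold emitted
  split_ifs with hx <;> linarith

lemma Kop_single (hd : 2 ≤ d) (t : LatZ d) (a : ℝ) (y : LatZ d) :
    Kop d p (Pi.single t a) y = a * (nbrWeight d p t y - if y = t then 1 else 0) := by
  rw [Kop_eq_nbrAvg_sub hd, nbrAvg_single, Pi.single_apply]
  split_ifs <;> ring

lemma topple_eq_add_Kop_single (hd : 2 ≤ d) (ν : LatZ d → ℝ) (x : LatZ d) :
    topple d p ν x = ν + Kop d p (Pi.single x (emitted d ν x)) := by
  funext y
  rw [Pi.add_apply, Kop_single hd]
  by_cases hfull : 1 ≤ ν x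
  · simp only [topple, emitted, if_pos hfull]
    split_ifs with hyx
    · subst hyx; ring
    · ring
  · simp [topple, emitted, hfull]

variable (ν₀ : LatZ d → ℝ) (T : ℕ → LatZ d)

lemma odom_succ (k : ℕ) :
    odom d p ν₀ T (k + 1) =
      odom d p ν₀ T k + Pi.single (T k) (emitted d (config d p ν₀ T k) (T k)) := by
  funext x
  simp only [odom, Finset.sum_range_succ, Pi.add_apply, Pi.single_apply, eq_comm (a := x)]
  split_ifs with h <;> simp [h]

lemma odom_monotone : Monotone (odom d p ν₀ T) :=
  monotone_nat_of_le_succ fun k => by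
    rw [odom_succ]
    exact le_add_of_nonneg_right (Pi.single_nonneg.2 (emitted_nonneg _ _))

lemma config_eq_add_Kop_odom (hd : 2 ≤ d) (k : ℕ) :
    config d p ν₀ T k = ν₀ + Kop d p (odom d p ν₀ T k) := by
  induction k with
  | zero =>
    funext x
    simp [config, odom, Kop]
  | succ k ih =>
    funext x
    simp only [config, topple_eq_add_Kop_single hd, ih, odom_succ, Kop_add, Pi.add_apply,
      add_assoc]

end Toppling

section LeastAction

variable {d : ℕ} {p : ℝ} {ν₀ : LatZ d → ℝ}

lemma odom_le_of_supersolution (hd : 2 ≤ d) (hp₀ : 0 ≤ p) (hp₁ : p ≤ 1) (T : ℕ → LatZ d)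
    {w : LatZ d → ℝ} (hw₀ : 0 ≤ w) (hw : ∀ x, ν₀ x + Kop d p w x ≤ 1) (k : ℕ) :
    odom d p ν₀ T k ≤ w := by
  induction k with
  | zero => intro x; simpa [odom] using hw₀ x
  | succ k ih =>
    intro x
    rw [odom_succ, Pi.add_apply, Pi.single_apply]
    split_ifs with hx
    · subst hx
      by_cases hfull : 1 ≤ config d p ν₀ T k (T k)
      -- toppling `x` sets the odometer at `x` to `ν₀ x + nbrAvg (odom k) x - 1`
      · have hAvg := nbrAvg_mono (by omega) hp₀ hp₁ ih (T k)
        have hwx := hw (T k)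
        rw [Kop_eq_nbrAvg_sub hd] at hwx
        rw [emitted_of_one_le hfull, config_eq_add_Kop_odom ν₀ T hd, Pi.add_apply,
          Kop_eq_nbrAvg_sub hd]
        linarith
      · simpa [emitted, hfull] using ih (T k)
    · simpa using ih x

lemma exists_supersolution (hp : 0 < p) {C : ℝ} (hC : 0 ≤ C) (M : ℤ) (hle : ∀ x, ν₀ x ≤ C)
    (hbelow : ∀ x : LatZ d, x.2 < M → ν₀ x ≤ 0) :
    ∃ w : LatZ d → ℝ, 0 ≤ w ∧ ∀ x, ν₀ x + Kop d p w x ≤ 1 := by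
  -- `𝒦` of this ramp in the drift direction is `-C` from layer `M` up, and `0` below
  let g : ℤ → ℝ := fun n => C / p * ((max 0 (n - M + 1) : ℤ) : ℝ)
  refine ⟨fun z => g z.2, fun z => by positivity, fun x => ?_⟩
  rw [Kop_comp_snd g]
  set δ : ℤ := max 0 (x.2 - M + 1) - max 0 (x.2 - 1 - M + 1)
  have hδ : 0 ≤ δ ∧ (M ≤ x.2 → δ = 1) := by omega
  have hK : p * (g x.2 - g (x.2 - 1)) = C * δ := by
    simp only [g, δ, Int.cast_sub]
    field_simp
  rw [hK]
  rcases lt_or_ge x.2 M with hx | hx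
  · nlinarith [hbelow x hx, (show (0 : ℝ) ≤ δ by exact_mod_cast hδ.1)]
  · rw [hδ.2 hx, Int.cast_one, mul_one]
    linarith [hle x]

lemma exists_supersolution_of_finite_support (hp : 0 < p)
    (hsupp : (Function.support ν₀).Finite) :
    ∃ w : LatZ d → ℝ, 0 ≤ w ∧ ∀ x, ν₀ x + Kop d p w x ≤ 1 := by
  obtain ⟨C, hC⟩ := (hsupp.image ν₀).bddAbove
  obtain ⟨M, hM⟩ := (hsupp.image Prod.snd).bddBelow
  refine exists_supersolution hp (le_max_right C 0) M (fun x => ?_) (fun x hx => ?_)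
  · by_cases hx : ν₀ x = 0
    · simp [hx]
    · exact le_max_of_le_left (hC ⟨x, hx, rfl⟩)
  · by_contra! hpos
    exact hx.not_ge (hM ⟨x, hpos.ne', rfl⟩)

end LeastAction

section Limit

variable {d : ℕ} {p : ℝ}

lemma config_limit_le_one {ν₀ : LatZ d → ℝ} {T : ℕ → LatZ d} (hT : IsScheme d p ν₀ T)
    {x : LatZ d} {a b : ℝ} (hu : Tendsto (fun k => odom d p ν₀ T k x) atTop (nhds a))
    (hν : Tendsto (fun k => config d p ν₀ T k x) atTop (nhds b)) : b ≤ 1 := by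
  by_contra! hb
  have hstep :
      Tendsto (fun k => odom d p ν₀ T (k + 1) x - odom d p ν₀ T k x) atTop (nhds 0) := by
    simpa using ((tendsto_add_atTop_iff_nat 1).2 hu).sub hu
  obtain ⟨K, hK⟩ := eventually_atTop.1 <|
    (hstep.eventually (gt_mem_nhds (half_pos (sub_pos.2 hb)))).and
      (hν.eventually (lt_mem_nhds (show 1 + (b - 1) / 2 < b by linarith)))
  obtain ⟨j, hKj, rfl⟩ := hT K x (by linarith [(hK K le_rfl).2]) K
  obtain ⟨hsmall, hlarge⟩ := hK j hKj
  rw [odom_succ, Pi.add_apply, Pi.single_eq_same, add_sub_cancel_left,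
    emitted_of_one_le (by linarith)] at hsmall
  linarith

end Limit

theorem unfair_divisible_sandpile_converges_general
    (d : ℕ) (hd : 2 ≤ d) (p : ℝ) (hp : p ∈ Set.Ioo (0:ℝ) 1)
    (ν₀ : LatZ d → ℝ) (hsupp : (Function.support ν₀).Finite)
    (T : ℕ → LatZ d) (hT : IsScheme d p ν₀ T) :
    ∃ u ν : LatZ d → ℝ,
      (∀ x, Tendsto (fun k => odom d p ν₀ T k x) atTop (nhds (u x))) ∧
      (∀ x, Tendsto (fun k => config d p ν₀ T k x) atTop (nhds (ν x))) ∧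
      (∀ x, ν x ≤ 1) ∧
      (∀ x, ν x = ν₀ x + Kop d p u x) := by
  obtain ⟨w, hw₀, hw⟩ := exists_supersolution_of_finite_support hp.1 hsupp
  have hbound := odom_le_of_supersolution hd hp.1.le hp.2.le T hw₀ hw
  let u : LatZ d → ℝ := fun x => ⨆ k, odom d p ν₀ T k x
  have hu (x : LatZ d) : Tendsto (fun k => odom d p ν₀ T k x) atTop (nhds (u x)) :=
    tendsto_atTop_ciSup (fun _ _ h => odom_monotone ν₀ T h x)
      ⟨w x, by rintro _ ⟨k, rfl⟩; exact hbound k x⟩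
  have hν (x : LatZ d) :
      Tendsto (fun k => config d p ν₀ T k x) atTop (nhds (ν₀ x + Kop d p u x)) := by
    simp only [config_eq_add_Kop_odom ν₀ T hd, Pi.add_apply]
    exact tendsto_const_nhds.add <|
      ((continuous_Kop_apply x).tendsto u).comp (tendsto_pi_nhds.2 hu)
  exact ⟨u, _, hu, hν, fun x => config_limit_le_one hT (hu x) (hν x), fun x => rfl⟩

theorem unfair_divisible_sandpile_converges
    (d : ℕ) (hd : 2 ≤ d) (p : ℝ) (hp : p ∈ Set.Ioo (0:ℝ) 1)
    (ν₀ : LatZ d → ℝ) (h0 : ∀ x, 0 ≤ ν₀ x) (hsupp : (Function.support ν₀).Finite)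
    (T : ℕ → LatZ d) (hT : IsScheme d p ν₀ T) (hL : IsLegal d p ν₀ T) :
    ∃ u ν : LatZ d → ℝ,
      (∀ x, Tendsto (fun k => odom d p ν₀ T k x) atTop (nhds (u x))) ∧
      (∀ x, Tendsto (fun k => config d p ν₀ T k x) atTop (nhds (ν x))) ∧
      (∀ x, ν x ≤ 1) ∧
      (∀ x, ν x = ν₀ x + Kop d p u x) :=
  unfair_divisible_sandpile_converges_general d hd p hp ν₀ hsupp T hT
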